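/- Let a, b ≥ 1, let τ be an (a·b)×(a·b) density matrix on the Kronecker-product space ℂ^a ⊗ ℂ^b, and let e ∈ ℂ^a be a unit vector. Then Tr[(e·eᴴ ⊗ I_b)·τ] = 1 if and only if there exists a b×b density matrix σ such that τ = (e·eᴴ) ⊗ σ, where ⊗ denotes the Kronecker product and I_b is the b×b identity matrix. -/

import Mathlib

/-!
Write `P = e·eᴴ ⊗ I = V Vᴴ`, where `V` is the isometry `x ↦ e ⊗ x`. If `Tr[P τ] = Tr τ`, then
`Q = 1 - P` satisfies `Tr[Q τ Q] = Tr[Q τ] = 0`; as `Q τ Q` is positive semidefinite it vanishes,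
which forces `τ Q = 0` and hence `τ = P τ P = V (Vᴴ τ V) Vᴴ = e·eᴴ ⊗ σ` with `σ = Vᴴ τ V`.
-/

open Matrix
open scoped ComplexOrder Kronecker

namespace Matrix

section PosSemidef

variable {n m 𝕜 : Type*} [Fintype n] [RCLike 𝕜]

lemma PosSemidef.mul_eq_zero_of_conjTranspose_mul_mul_eq_zero {A : Matrix n n 𝕜}
    (hA : A.PosSemidef) {B : Matrix n m 𝕜} (h : Bᴴ * A * B = 0) : A * B = 0 := by
  classical
  open scoped MatrixOrder in
  obtain ⟨X, rfl⟩ := CStarAlgebra.nonneg_iff_eq_star_mul_self.mp hA.nonneg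
  have hXB : (X * B)ᴴ * (X * B) = 0 := by
    simpa only [conjTranspose_mul, Matrix.mul_assoc, star_eq_conjTranspose] using h
  rw [conjTranspose_mul_self_eq_zero] at hXB
  rw [Matrix.mul_assoc, hXB, Matrix.mul_zero]

lemma PosSemidef.mul_eq_zero_of_trace_mul_eq_zero {A Q : Matrix n n 𝕜} (hA : A.PosSemidef)
    (hQ : IsStarProjection Q) (h : trace (Q * A) = 0) : A * Q = 0 := by
  have hQH : Qᴴ = Q := hQ.isSelfAdjoint
  refine hA.mul_eq_zero_of_conjTranspose_mul_mul_eq_zero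
    ((hA.conjTranspose_mul_mul_same Q).trace_eq_zero_iff.mp ?_)
  rw [hQH, trace_mul_cycle, hQ.isIdempotentElem.eq, h]

lemma PosSemidef.mul_mul_eq_self_of_trace_mul_eq_trace [DecidableEq n] {A P : Matrix n n 𝕜}
    (hA : A.PosSemidef) (hP : IsStarProjection P) (h : trace (P * A) = trace A) :
    P * A * P = A := by
  have hAQ : A * (1 - P) = 0 := hA.mul_eq_zero_of_trace_mul_eq_zero hP.one_sub
    (by rw [Matrix.sub_mul, trace_sub, Matrix.one_mul, h, sub_self])
  have hQA : (1 - P) * A = 0 := by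
    have hPH : Pᴴ = P := hP.isSelfAdjoint
    simpa [hA.isHermitian.eq, hPH] using congrArg (·ᴴ) hAQ
  rw [Matrix.mul_sub, Matrix.mul_one, sub_eq_zero] at hAQ
  rw [Matrix.sub_mul, Matrix.one_mul, sub_eq_zero] at hQA
  rw [← hQA, ← hAQ]

end PosSemidef

section KroneckerVec

/-- The matrix of the map `x ↦ e ⊗ₖ x`. -/
def kroneckerVec {m R : Type*} [Zero R] (e : m → R) (n : Type*) [DecidableEq n] :
    Matrix (m × n) n R :=
  of fun p j => if p.2 = j then e p.1 else 0

variable {m n R : Type*} [Fintype n] [DecidableEq n] [CommRing R] [StarRing R]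

lemma conjTranspose_kroneckerVec_mul_kroneckerVec [Fintype m] (e : m → R) :
    (kroneckerVec e n)ᴴ * kroneckerVec e n = (star e ⬝ᵥ e) • 1 := by
  ext j j'
  by_cases hj : j = j' <;>
    simp [kroneckerVec, mul_apply, Fintype.sum_prod_type, dotProduct, hj, eq_comm]

lemma kroneckerVec_mul_mul_conjTranspose (e : m → R) (σ : Matrix n n R) :
    kroneckerVec e n * σ * (kroneckerVec e n)ᴴ = vecMulVec e (star e) ⊗ₖ σ := by
  ext ⟨i, j⟩ ⟨i', j'⟩
  simp [kroneckerVec, mul_apply, apply_ite star, vecMulVec_apply]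
  ring

end KroneckerVec

lemma isStarProjection_mul_conjTranspose {m n R : Type*} [Fintype m] [Fintype n] [DecidableEq n]
    [Semiring R] [StarRing R] {V : Matrix m n R} (hV : Vᴴ * V = 1) :
    IsStarProjection (V * Vᴴ) where
  isIdempotentElem := by
    rw [IsIdempotentElem, Matrix.mul_assoc, ← Matrix.mul_assoc Vᴴ, hV, Matrix.one_mul]
  isSelfAdjoint := by simp [IsSelfAdjoint, star_eq_conjTranspose]

end Matrix

theorem trace_eq_one_iff_decoupled_general
    (a b : ℕ)
    (τ : Matrix (Fin a × Fin b) (Fin a × Fin b) ℂ)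
    (hτ_psd : τ.PosSemidef) (hτ_tr : Matrix.trace τ = 1)
    (e : Fin a → ℂ) (he : star e ⬝ᵥ e = 1) :
    Matrix.trace ((Matrix.vecMulVec e (star e) ⊗ₖ (1 : Matrix (Fin b) (Fin b) ℂ)) * τ) = 1
      ↔ ∃ σ : Matrix (Fin b) (Fin b) ℂ, σ.PosSemidef ∧ Matrix.trace σ = 1 ∧
          τ = Matrix.vecMulVec e (star e) ⊗ₖ σ := by
  set V := kroneckerVec e (Fin b)
  have hV : Vᴴ * V = 1 := by rw [conjTranspose_kroneckerVec_mul_kroneckerVec, he, one_smul]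
  have hkron (σ : Matrix (Fin b) (Fin b) ℂ) : vecMulVec e (star e) ⊗ₖ σ = V * σ * Vᴴ :=
    (kroneckerVec_mul_mul_conjTranspose e σ).symm
  rw [hkron, Matrix.mul_one]
  constructor
  · intro h
    have hτ : V * Vᴴ * τ * (V * Vᴴ) = τ :=
      hτ_psd.mul_mul_eq_self_of_trace_mul_eq_trace (isStarProjection_mul_conjTranspose hV)
        (by rw [h, hτ_tr])
    refine ⟨Vᴴ * τ * V, hτ_psd.conjTranspose_mul_mul_same V, ?_, ?_⟩
    · rwa [trace_mul_cycle]
    · conv_lhs => rw [← hτ]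
      simp only [hkron, Matrix.mul_assoc]
  · rintro ⟨σ, -, hσ_tr, rfl⟩
    simp only [hkron, ← Matrix.mul_assoc]
    rw [Matrix.mul_assoc V Vᴴ V, hV, Matrix.mul_one, trace_mul_cycle, hV, Matrix.one_mul, hσ_tr]

/-- Exact decoupling: for a density matrix `τ` on `ℂ^a ⊗ ℂ^b` and a unit vector
`e ∈ ℂ^a`, `Tr[(e·eᴴ ⊗ I_b)·τ] = 1` iff `τ = (e·eᴴ) ⊗ σ` for some `b × b`
density matrix `σ`. -/
theorem trace_eq_one_iff_decoupled
    (a b : ℕ) (ha : 1 ≤ a) (hb : 1 ≤ b)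
    (τ : Matrix (Fin a × Fin b) (Fin a × Fin b) ℂ)
    (hτ_psd : τ.PosSemidef) (hτ_tr : Matrix.trace τ = 1)
    (e : Fin a → ℂ) (he : star e ⬝ᵥ e = 1) :
    Matrix.trace ((Matrix.vecMulVec e (star e) ⊗ₖ (1 : Matrix (Fin b) (Fin b) ℂ)) * τ) = 1
      ↔ ∃ σ : Matrix (Fin b) (Fin b) ℂ, σ.PosSemidef ∧ Matrix.trace σ = 1 ∧
          τ = Matrix.vecMulVec e (star e) ⊗ₖ σ :=
  trace_eq_one_iff_decoupled_general a b τ hτ_psd hτ_tr e he
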